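/- arXiv:2209.06401 — 2 statements merged into one kernel-verified Lean document; each statement's English description precedes it below -/
import Mathlib

section
/- Suppose an r×r symmetric ρ-latin rectangle L can be completed to an n×n symmetric ρ-latin square. Then: (1) ρ_ℓ − e_ℓ ≤ 2(n−r) for all ℓ ∈ [k]; (2) |{ℓ ∈ [k] : ρ_ℓ ≢ e_ℓ (mod 2)}| ≤ n−r; and (3) |{ℓ ∈ [k] : ρ_ℓ ≢ e_ℓ (mod 2)}| ≡ n−r (mod 2). That is, L is ρ-admissible. -/
open Finset

/-- Number of occurrences of the symbol `ℓ` in the `m × m` array `A` (symbols in `Fin k`). -/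
def occ {m k : ℕ} (A : Fin m → Fin m → Fin k) (ℓ : Fin k) : ℕ :=
  (Finset.univ.filter fun p : Fin m × Fin m => A p.1 p.2 = ℓ).card

/-- `A` is a symmetric `ρ`-latin square of order `n` on the symbol set `Fin k`:
each symbol occurs at most once in each row and in each column (rows and columns are
injective), `A` is symmetric, and each symbol `ℓ` occurs exactly `ρ ℓ` times. -/
def IsSymRhoLS {n k : ℕ} (ρ : Fin k → ℕ) (A : Fin n → Fin n → Fin k) : Prop :=
  (∀ i, Function.Injective (A i)) ∧
  (∀ j, Function.Injective fun i => A i j) ∧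
  (∀ i j, A i j = A j i) ∧
  (∀ ℓ, occ A ℓ = ρ ℓ)

/-- `R` is an `r × r` symmetric `ρ`-latin rectangle on the symbol set `Fin k`:
each symbol occurs at most once in each row and in each column, `R` is symmetric,
and each symbol `ℓ` occurs at most `ρ ℓ` times. -/
def IsSymRhoRect {r k : ℕ} (ρ : Fin k → ℕ) (R : Fin r → Fin r → Fin k) : Prop :=
  (∀ i, Function.Injective (R i)) ∧
  (∀ j, Function.Injective fun i => R i j) ∧
  (∀ i j, R i j = R j i) ∧
  (∀ ℓ, occ R ℓ ≤ ρ ℓ)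

/-- `A` completes `R`: `R` is the top-left `r × r` subarray of `A`. -/
def Completes {r n k : ℕ} (h : r ≤ n) (R : Fin r → Fin r → Fin k)
    (A : Fin n → Fin n → Fin k) : Prop :=
  ∀ i j : Fin r, A (Fin.castLE h i) (Fin.castLE h j) = R i j

/-- The number of diagonal cells `A i i` with `i` beyond the first `r` rows holding symbol `ℓ`. -/
def diagTail {n k : ℕ} (r : ℕ) (A : Fin n → Fin n → Fin k) (ℓ : Fin k) : ℕ :=
  (Finset.univ.filter fun i : Fin n => r ≤ (i : ℕ) ∧ A i i = ℓ).card

/-- `μ_I(ℓ)`: the number of rows in `I` in which the symbol `ℓ` does not occur. -/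
def muRows {r k : ℕ} (R : Fin r → Fin r → Fin k) (I : Finset (Fin r)) (ℓ : Fin k) : ℕ :=
  (I.filter fun i => ∀ j, R i j ≠ ℓ).card

/-- `μ_K(i)`: the number of symbols in `K` not occurring in row `i`. -/
def muSyms {r k : ℕ} (R : Fin r → Fin r → Fin k) (K : Finset (Fin k)) (i : Fin r) : ℕ :=
  (K.filter fun ℓ => ∀ j, R i j ≠ ℓ).card

/-- `R` is `ρ`-admissible. -/
def RhoAdmissible {r k : ℕ} (n : ℕ) (ρ : Fin k → ℕ) (R : Fin r → Fin r → Fin k) : Prop :=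
  (∀ ℓ, ρ ℓ - occ R ℓ ≤ 2 * (n - r)) ∧
  (Finset.univ.filter fun ℓ : Fin k => ¬ ρ ℓ % 2 = occ R ℓ % 2).card ≤ n - r ∧
  (Finset.univ.filter fun ℓ : Fin k => ¬ ρ ℓ % 2 = occ R ℓ % 2).card % 2 = (n - r) % 2

/-- `R` is nearly `ρ`-admissible. -/
def NearlyRhoAdmissible {r k : ℕ} (n : ℕ) (ρ : Fin k → ℕ) (R : Fin r → Fin r → Fin k) : Prop :=
  (Finset.univ.filter fun ℓ : Fin k => ¬ ρ ℓ % 2 = occ R ℓ % 2).card ≤ n - r ∧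
  (Finset.univ.filter fun ℓ : Fin k => ¬ ρ ℓ % 2 = occ R ℓ % 2).card % 2 = (n - r) % 2

/-- `R` is `(ρ, d)`-admissible. -/
def RhoDAdmissible {r k : ℕ} (n : ℕ) (ρ d : Fin k → ℕ) (R : Fin r → Fin r → Fin k) : Prop :=
  (∀ ℓ, ρ ℓ - occ R ℓ + d ℓ ≤ 2 * (n - r)) ∧
  (∀ ℓ, Even (ρ ℓ + occ R ℓ + d ℓ))

/-! In a symmetric array, the swap `(i, j) ↦ (j, i)` pairs off the off-diagonal cells holding a
symbol `ℓ`, so the number of occurrences of `ℓ` has the parity of its number of diagonal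
occurrences. In the completion `A`, the diagonal of the corner `R` is part of the diagonal
of `A`, so `ρ_ℓ - e_ℓ` is odd exactly when `ℓ` occurs an odd number `d_ℓ` of times on the remaining
`n - r` diagonal cells. As `∑ d_ℓ = n - r`, the number of such `ℓ` is at most `n - r` and has its
parity. Condition (1) holds because every cell of `A` outside the corner lies in one of the last
`n - r` rows or columns, each of which contains `ℓ` at most once. -/

namespace Finset

variable {ι : Type*} (s : Finset ι) (f : ι → ℕ)

theorem card_filter_odd_le_sum : #{x ∈ s | Odd (f x)} ≤ ∑ x ∈ s, f x :=
  calc #{x ∈ s | Odd (f x)} = ∑ x ∈ s with Odd (f x), 1 := card_eq_sum_ones _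
    _ ≤ ∑ x ∈ s with Odd (f x), f x := sum_le_sum fun _ hx => (mem_filter.1 hx).2.pos
    _ ≤ ∑ x ∈ s, f x := sum_le_sum_of_subset (filter_subset _ _)

theorem card_filter_odd_mod_two : #{x ∈ s | Odd (f x)} % 2 = (∑ x ∈ s, f x) % 2 := by
  have := even_sum_iff_even_card_odd (s := s) f
  rw [Nat.even_iff, Nat.even_iff] at this
  omega

end Finset

section Cells

variable {α β : Type*} [Fintype α] [DecidableEq β] (A : α → α → β) (b : β)

theorem card_cells_mod_two_eq_card_diag [LinearOrder α] (hA : ∀ i j, A i j = A j i) :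
    #{p : α × α | A p.1 p.2 = b} % 2 = #{i | A i i = b} % 2 := by
  have hsplit : #{p : α × α | A p.1 p.2 = b} = #{p : α × α | A p.1 p.2 = b ∧ p.1 = p.2} +
      #{p : α × α | A p.1 p.2 = b ∧ p.1 < p.2} + #{p : α × α | A p.1 p.2 = b ∧ p.2 < p.1} := by
    rw [← card_union_of_disjoint, ← card_union_of_disjoint, ← filter_or, ← filter_or]
    · congr 1; ext p; simp only [mem_filter, mem_univ, true_and]
      have := lt_trichotomy p.1 p.2; tauto
    all_goals simp only [disjoint_left, mem_filter]; grind
  have hdiag : #{p : α × α | A p.1 p.2 = b ∧ p.1 = p.2} = #{i | A i i = b} :=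
    card_nbij' Prod.fst (fun i => (i, i)) (by intro p; grind) (by intro i; grind)
      (by intro p; grind) (by intro i; grind)
  have hswap : #{p : α × α | A p.1 p.2 = b ∧ p.1 < p.2} =
      #{p : α × α | A p.1 p.2 = b ∧ p.2 < p.1} :=
    card_nbij' Prod.swap Prod.swap (by intro p; grind) (by intro p; grind)
      (by intro p; grind) (by intro p; grind)
  omega

theorem card_cells_row_mem_le [DecidableEq α] (hrow : ∀ i, Function.Injective (A i))
    (I : Finset α) :
    #{p : α × α | A p.1 p.2 = b ∧ p.1 ∈ I} ≤ #I :=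
  card_le_card_of_injOn Prod.fst (by intro p; grind) fun p hp q hq h => by
    simp only [mem_coe, mem_filter, mem_univ, true_and] at hp hq
    exact Prod.ext h (hrow p.1 (by rw [hp.1, h, hq.1]))

theorem card_cells_col_mem_le [DecidableEq α] (hcol : ∀ j, Function.Injective fun i => A i j)
    (I : Finset α) :
    #{p : α × α | A p.1 p.2 = b ∧ p.2 ∈ I} ≤ #I :=
  card_le_card_of_injOn Prod.snd (by intro p; grind) fun p hp q hq h => by
    simp only [mem_coe, mem_filter, mem_univ, true_and] at hp hq
    exact Prod.ext (hcol p.2 (by simp only; rw [hp.1, h, hq.1])) h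

end Cells

section Restriction

variable {n r k : ℕ} {A : Fin n → Fin n → Fin k} {R : Fin r → Fin r → Fin k} {e : Fin r ↪ Fin n}

theorem occ_le_occ_add_two_mul_card_compl (hrow : ∀ i, Function.Injective (A i))
    (hcol : ∀ j, Function.Injective fun i => A i j) (hAR : ∀ i j, A (e i) (e j) = R i j)
    (ℓ : Fin k) : occ A ℓ ≤ occ R ℓ + 2 * #(univ.map e)ᶜ := by
  set T := (univ.map e)ᶜ
  have hcover : (univ.filter fun p : Fin n × Fin n => A p.1 p.2 = ℓ) ⊆
      ((univ.filter fun q : Fin r × Fin r => R q.1 q.2 = ℓ).map (e.prodMap e) ∪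
        univ.filter fun p : Fin n × Fin n => A p.1 p.2 = ℓ ∧ p.1 ∈ T) ∪
        univ.filter fun p : Fin n × Fin n => A p.1 p.2 = ℓ ∧ p.2 ∈ T := by
    rintro ⟨x, y⟩ hp
    simp only [T, mem_filter, mem_univ, true_and, mem_union, mem_compl, mem_map,
      Function.Embedding.coe_prodMap, Prod.map, Prod.mk.injEq] at hp ⊢
    by_cases hx : ∃ i, e i = x <;> by_cases hy : ∃ j, e j = y
    · obtain ⟨i, rfl⟩ := hx
      obtain ⟨j, rfl⟩ := hy
      exact Or.inl (Or.inl ⟨(i, j), by rw [← hAR, hp], rfl, rfl⟩)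
    all_goals tauto
  have hunion := (card_le_card hcover).trans
    ((card_union_le _ _).trans (Nat.add_le_add_right (card_union_le _ _) _))
  rw [card_map] at hunion
  have hrowT := card_cells_row_mem_le A ℓ hrow T
  have hcolT := card_cells_col_mem_le A ℓ hcol T
  unfold occ
  omega

theorem card_diag_eq_card_diag_add_card_diag_compl (hAR : ∀ i j, A (e i) (e j) = R i j)
    (ℓ : Fin k) :
    #{i | A i i = ℓ} = #{i | R i i = ℓ} + #{i ∈ (univ.map e)ᶜ | A i i = ℓ} := by
  rw [← card_filter_add_card_filter_not (p := (· ∈ univ.map e)), filter_filter, filter_filter]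
  congr 1
  · rw [← card_map e]
    congr 1; ext i
    simp only [mem_filter, mem_univ, true_and, mem_map]
    constructor
    · rintro ⟨h, j, rfl⟩; exact ⟨j, by rw [← hAR, h], rfl⟩
    · rintro ⟨j, h, rfl⟩; exact ⟨by rw [hAR, h], j, rfl⟩
  · congr 1; ext i; simp only [mem_filter, mem_univ, true_and, mem_compl]; tauto

theorem occ_mod_two_ne_iff_odd_card_diag_compl (hsym : ∀ i j, A i j = A j i)
    (hAR : ∀ i j, A (e i) (e j) = R i j) (ℓ : Fin k) :
    ¬ occ A ℓ % 2 = occ R ℓ % 2 ↔ Odd #{i ∈ (univ.map e)ᶜ | A i i = ℓ} := by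
  have hRsym : ∀ i j, R i j = R j i := fun i j => by rw [← hAR, hsym, hAR]
  have hAdiag := card_cells_mod_two_eq_card_diag A ℓ hsym
  have hRdiag := card_cells_mod_two_eq_card_diag R ℓ hRsym
  have hsplit := card_diag_eq_card_diag_add_card_diag_compl hAR ℓ
  rw [Nat.odd_iff]
  unfold occ
  omega

theorem rhoAdmissible_of_isSymRhoLS_restrict {ρ : Fin k → ℕ} (hA : IsSymRhoLS ρ A)
    (hAR : ∀ i j, A (e i) (e j) = R i j) : RhoAdmissible n ρ R := by
  obtain ⟨hrow, hcol, hsym, hocc⟩ := hA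
  have hT : #(univ.map e)ᶜ = n - r := by simp [card_compl]
  set d : Fin k → ℕ := fun ℓ => #{i ∈ (univ.map e)ᶜ | A i i = ℓ}
  have hsum : ∑ ℓ, d ℓ = n - r := by
    rw [← hT, card_eq_sum_card_fiberwise (f := fun i => A i i) (t := univ) (fun _ _ => mem_univ _)]
  have hodd : (univ.filter fun ℓ => ¬ ρ ℓ % 2 = occ R ℓ % 2) = univ.filter fun ℓ => Odd (d ℓ) :=
    filter_congr fun ℓ _ => by
      rw [← hocc ℓ]; exact occ_mod_two_ne_iff_odd_card_diag_compl hsym hAR ℓ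
  refine ⟨fun ℓ => ?_, ?_, ?_⟩
  · have := occ_le_occ_add_two_mul_card_compl hrow hcol hAR ℓ
    rw [hocc ℓ, hT] at this
    omega
  · rw [hodd, ← hsum]
    exact card_filter_odd_le_sum _ _
  · rw [hodd, ← hsum]
    exact card_filter_odd_mod_two _ _

end Restriction

theorem rhoAdmissible_of_completion_general (n k r : ℕ) (hrn : r ≤ n) (ρ : Fin k → ℕ)
    (R : Fin r → Fin r → Fin k)
    (hcomp : ∃ A : Fin n → Fin n → Fin k, IsSymRhoLS ρ A ∧ Completes hrn R A) :
    RhoAdmissible n ρ R := by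
  obtain ⟨A, hA, hAR⟩ := hcomp
  exact rhoAdmissible_of_isSymRhoLS_restrict (e := Fin.castLEEmb hrn) hA hAR

/-- If an `r × r` symmetric `ρ`-latin rectangle can be completed to an
`n × n` symmetric `ρ`-latin square, then it is `ρ`-admissible. -/
theorem rhoAdmissible_of_completion (n k r : ℕ) (hn : 0 < n) (hrn : r ≤ n) (hnk : n ≤ k)
    (ρ : Fin k → ℕ) (hρ1 : ∀ ℓ, 1 ≤ ρ ℓ) (hρn : ∀ ℓ, ρ ℓ ≤ n)
    (hρsum : ∑ ℓ, ρ ℓ = n ^ 2)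
    (R : Fin r → Fin r → Fin k) (hR : IsSymRhoRect ρ R)
    (hcomp : ∃ A : Fin n → Fin n → Fin k, IsSymRhoLS ρ A ∧ Completes hrn R A) :
    RhoAdmissible n ρ R :=
  rhoAdmissible_of_completion_general n k r hrn ρ R hcomp
end

section
/- Suppose an r×r symmetric ρ-latin rectangle L can be completed to an n×n symmetric ρ-latin square L' with diagonal tail d = (d_1,…,d_k). Then ρ_ℓ − e_ℓ + d_ℓ ≤ 2(n−r) and ρ_ℓ − e_ℓ + d_ℓ ≡ 0 (mod 2) for every ℓ ∈ [k]; that is, L is (ρ,d)-admissible. -/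
open Finset

/-!
Fix a symbol `ℓ`. By symmetry, its occurrences in the completed square that lie outside the
top-left `r × r` block are closed under transposition, so they consist of the `d ℓ` diagonal
cells `(i, i)` with `i ≥ r` together with mirror pairs: `ρ ℓ - e ℓ + d ℓ = 2u`, where `u`
counts those occurrences on or above the diagonal. Each of these lies in one of the last
`n - r` columns, and a column contains `ℓ` at most once, so `u ≤ n - r`.
-/

theorem card_add_card_filter_fst_eq_snd {α : Type*} [LinearOrder α] {s : Finset (α × α)}
    (hs : ∀ p ∈ s, p.swap ∈ s) :
    #s + #(s.filter fun p => p.1 = p.2) = 2 * #(s.filter fun p => p.1 ≤ p.2) := by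
  have hunion : s.filter (fun p => p.1 ≤ p.2) ∪ s.filter (fun p => p.2 ≤ p.1) = s := by
    rw [← filter_or]
    exact filter_true_of_mem fun p _ => le_total _ _
  have hinter : s.filter (fun p => p.1 ≤ p.2) ∩ s.filter (fun p => p.2 ≤ p.1) =
      s.filter fun p => p.1 = p.2 := by
    simp only [← filter_and, ← le_antisymm_iff]
  have hswap : #(s.filter fun p => p.2 ≤ p.1) = #(s.filter fun p => p.1 ≤ p.2) :=
    card_equiv (Equiv.prodComm α α) fun p => by
      simp only [mem_filter, Equiv.prodComm_apply, Prod.fst_swap, Prod.snd_swap]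
      exact ⟨fun h => ⟨hs p h.1, h.2⟩, fun h => ⟨by simpa using hs _ h.1, h.2⟩⟩
  have := card_union_add_card_inter (s.filter fun p => p.1 ≤ p.2) (s.filter fun p => p.2 ≤ p.1)
  rw [hunion, hinter, hswap] at this
  omega

section Completion

variable {n k r : ℕ} {A : Fin n → Fin n → Fin k} {ℓ : Fin k}

def cellsOutsideBlock (r : ℕ) (A : Fin n → Fin n → Fin k) (ℓ : Fin k) :
    Finset (Fin n × Fin n) :=
  univ.filter fun p => A p.1 p.2 = ℓ ∧ ¬((p.1 : ℕ) < r ∧ (p.2 : ℕ) < r)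

theorem occ_eq_occ_add_card_cellsOutsideBlock {R : Fin r → Fin r → Fin k} (hrn : r ≤ n)
    (hcomp : Completes hrn R A) (ℓ : Fin k) :
    occ A ℓ = occ R ℓ + #(cellsOutsideBlock r A ℓ) := by
  have hblock : occ R ℓ =
      #(univ.filter fun p : Fin n × Fin n =>
        A p.1 p.2 = ℓ ∧ ((p.1 : ℕ) < r ∧ (p.2 : ℕ) < r)) := by
    refine card_nbij (fun q => (Fin.castLE hrn q.1, Fin.castLE hrn q.2)) ?_ ?_ ?_
    · intro q hq
      simp_all [Completes]
    · intro q _ q' _ h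
      simp only [Prod.mk.injEq, Fin.castLE_inj] at h
      exact Prod.ext h.1 h.2
    · rintro ⟨i, j⟩ hp
      simp only [coe_filter, mem_univ, true_and, Set.mem_ofPred_eq] at hp
      refine ⟨(⟨i, hp.2.1⟩, ⟨j, hp.2.2⟩), ?_, rfl⟩
      simp only [coe_filter, mem_univ, true_and, Set.mem_ofPred_eq]
      rw [← hcomp]
      exact hp.1
  rw [hblock, cellsOutsideBlock, occ,
    ← card_union_of_disjoint (disjoint_filter.2 fun _ _ h h' => h'.2 h.2)]
  congr 1
  ext p
  simp only [mem_filter, mem_univ, true_and, mem_union]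
  tauto

theorem occ_le_occ_of_completes {R : Fin r → Fin r → Fin k} (hrn : r ≤ n)
    (hcomp : Completes hrn R A) (ℓ : Fin k) : occ R ℓ ≤ occ A ℓ := by
  rw [occ_eq_occ_add_card_cellsOutsideBlock hrn hcomp]
  exact Nat.le_add_right _ _

theorem swap_mem_cellsOutsideBlock (hsym : ∀ i j, A i j = A j i) {p : Fin n × Fin n}
    (hp : p ∈ cellsOutsideBlock r A ℓ) : p.swap ∈ cellsOutsideBlock r A ℓ := by
  simp only [cellsOutsideBlock, mem_filter, mem_univ, true_and, Prod.fst_swap,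
    Prod.snd_swap] at hp ⊢
  exact ⟨hsym _ _ ▸ hp.1, fun h => hp.2 ⟨h.2, h.1⟩⟩

theorem card_cellsOutsideBlock_filter_fst_eq_snd :
    #((cellsOutsideBlock r A ℓ).filter fun p => p.1 = p.2) = diagTail r A ℓ := by
  rw [diagTail]
  refine card_nbij' Prod.fst (fun i => (i, i)) ?_ ?_ ?_ ?_
  · rintro ⟨i, j⟩ h
    simp only [cellsOutsideBlock, coe_filter, mem_filter, mem_univ, true_and,
      Set.mem_ofPred_eq] at h ⊢
    obtain ⟨⟨hA, hout⟩, rfl⟩ := h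
    exact ⟨by omega, hA⟩
  · intro i h
    simp only [cellsOutsideBlock, coe_filter, mem_filter, mem_univ, true_and,
      Set.mem_ofPred_eq] at h ⊢
    exact ⟨⟨h.2, by omega⟩, trivial⟩
  · rintro ⟨i, j⟩ h
    simp only [coe_filter, Set.mem_ofPred_eq] at h
    simp [h.2]
  · intro i _
    rfl

theorem card_le_sub_of_injective_col (hcol : ∀ j, Function.Injective fun i => A i j)
    {s : Finset (Fin n × Fin n)} (hs : ∀ p ∈ s, A p.1 p.2 = ℓ ∧ r ≤ (p.2 : ℕ)) :
    #s ≤ n - r := by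
  have hmaps : Set.MapsTo (fun p : Fin n × Fin n => (p.2 : ℕ)) s (Ico r n) := fun p hp =>
    mem_Ico.2 ⟨(hs p hp).2, p.2.isLt⟩
  have hinj : Set.InjOn (fun p : Fin n × Fin n => (p.2 : ℕ)) s := fun p hp q hq h => by
    have hcol' : p.2 = q.2 := Fin.ext h
    refine Prod.ext (hcol q.2 ?_) hcol'
    change A p.1 q.2 = A q.1 q.2
    rw [(hs q hq).1, ← hcol', (hs p hp).1]
  simpa using card_le_card_of_injOn _ hmaps hinj

theorem exists_occ_add_diagTail_eq {R : Fin r → Fin r → Fin k} (hrn : r ≤ n)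
    (hcol : ∀ j, Function.Injective fun i => A i j) (hsym : ∀ i j, A i j = A j i)
    (hcomp : Completes hrn R A) (ℓ : Fin k) :
    ∃ u ≤ n - r, occ A ℓ + diagTail r A ℓ = occ R ℓ + 2 * u := by
  refine ⟨#((cellsOutsideBlock r A ℓ).filter fun p => p.1 ≤ p.2), ?_, ?_⟩
  · refine card_le_sub_of_injective_col (ℓ := ℓ) hcol fun p hp => ?_
    simp only [cellsOutsideBlock, mem_filter, mem_univ, true_and] at hp
    have hle : (p.1 : ℕ) ≤ p.2 := hp.2
    exact ⟨hp.1.1, by omega⟩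
  · rw [occ_eq_occ_add_card_cellsOutsideBlock hrn hcomp,
      ← card_cellsOutsideBlock_filter_fst_eq_snd, add_assoc,
      card_add_card_filter_fst_eq_snd fun p hp => swap_mem_cellsOutsideBlock hsym hp]

end Completion

theorem rhoDAdmissible_of_completion_general (n k r : ℕ) (hrn : r ≤ n)
    (ρ : Fin k → ℕ)
    (R : Fin r → Fin r → Fin k) (d : Fin k → ℕ)
    (hcomp : ∃ A : Fin n → Fin n → Fin k, IsSymRhoLS ρ A ∧ Completes hrn R A ∧
        ∀ ℓ, diagTail r A ℓ = d ℓ) :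
    RhoDAdmissible n ρ d R := by
  obtain ⟨A, ⟨-, hcol, hsym, hocc⟩, hcompl, hdiag⟩ := hcomp
  have key : ∀ ℓ, occ R ℓ ≤ ρ ℓ ∧ ∃ u ≤ n - r, ρ ℓ + d ℓ = occ R ℓ + 2 * u := fun ℓ => by
    rw [← hocc, ← hdiag]
    exact ⟨occ_le_occ_of_completes hrn hcompl ℓ,
      exists_occ_add_diagTail_eq hrn hcol hsym hcompl ℓ⟩
  refine ⟨fun ℓ => ?_, fun ℓ => ?_⟩ <;> obtain ⟨hle, u, hu, h⟩ := key ℓ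
  · omega
  · exact ⟨occ R ℓ + u, by omega⟩

/-- If an `r × r` symmetric `ρ`-latin rectangle can be completed to an
`n × n` symmetric `ρ`-latin square with diagonal tail `d`, then it is `(ρ, d)`-admissible. -/
theorem rhoDAdmissible_of_completion (n k r : ℕ) (hn : 0 < n) (hrn : r ≤ n) (hnk : n ≤ k)
    (ρ : Fin k → ℕ) (hρ1 : ∀ ℓ, 1 ≤ ρ ℓ) (hρn : ∀ ℓ, ρ ℓ ≤ n)
    (hρsum : ∑ ℓ, ρ ℓ = n ^ 2)
    (R : Fin r → Fin r → Fin k) (hR : IsSymRhoRect ρ R) (d : Fin k → ℕ)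
    (hcomp : ∃ A : Fin n → Fin n → Fin k, IsSymRhoLS ρ A ∧ Completes hrn R A ∧
        ∀ ℓ, diagTail r A ℓ = d ℓ) :
    RhoDAdmissible n ρ d R :=
  rhoDAdmissible_of_completion_general n k r hrn ρ R d hcomp
end
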